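/- arXiv:math/0501259 — 2 statements merged into one kernel-verified Lean document; each statement's English description precedes it below -/
import Mathlib

section
/- Let (M,ω) be a symplectic manifold of dimension 2n. If α is a primitive k-form, then dδ(α) is also primitive. -/
noncomputable section

/-- Abstract model of the graded algebra `Ω^*(M)` of differential forms on a
symplectic manifold `(M, ω)` of dimension `2 n`, together with the exterior
differential `d`, the symplectic star operator `star` of Libermann–Brylinski
(satisfying `* ∘ * = Id`), the symplectic codifferential `δ = ± * d *`, the
Lefschetz operator `L` (wedge product with `ω`) and the contraction
`iota = ι_G` with the Poisson bivector field `G = -♮⁻¹(ω)` dual to `ω`.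
Here `Ω` is the total space of forms and `deg k` is the subspace `Ω^k(M)`
of `k`-forms. -/
structure SymplecticFormsComplex (n : ℕ) where
  Ω : Type*
  [addCommGroupForms : AddCommGroup Ω]
  [moduleForms : Module ℝ Ω]
  deg : ℤ → Submodule ℝ Ω
  deg_eq_bot : ∀ k : ℤ, (k < 0 ∨ (2 * n : ℤ) < k) → deg k = ⊥
  d : Ω →ₗ[ℝ] Ω
  star : Ω →ₗ[ℝ] Ω
  L : Ω →ₗ[ℝ] Ω
  iota : Ω →ₗ[ℝ] Ω
  δ : Ω →ₗ[ℝ] Ω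
  d_mem : ∀ k : ℤ, ∀ α ∈ deg k, d α ∈ deg (k + 1)
  star_mem : ∀ k : ℤ, ∀ α ∈ deg k, star α ∈ deg (2 * n - k)
  L_mem : ∀ k : ℤ, ∀ α ∈ deg k, L α ∈ deg (k + 2)
  iota_mem : ∀ k : ℤ, ∀ α ∈ deg k, iota α ∈ deg (k - 2)
  δ_mem : ∀ k : ℤ, ∀ α ∈ deg k, δ α ∈ deg (k - 1)
  d_d : ∀ α, d (d α) = 0
  star_star : ∀ α, star (star α) = α
  δ_def : ∀ k : ℤ, ∀ α ∈ deg k, δ α = (-1 : ℝ) ^ (k + 1) • star (d (star α))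
  δ_δ : ∀ α, δ (δ α) = 0
  d_δ_anticomm : ∀ α, d (δ α) + δ (d α) = 0
  d_L_comm : ∀ α, d (L α) = L (d α)
  L_δ_comm : ∀ α, δ (L α) = L (δ α) + d α
  iota_d_comm : ∀ α, iota (d α) - d (iota α) = δ α
  iota_L_comm : ∀ k : ℤ, ∀ α ∈ deg k, iota (L α) - L (iota α) = ((n : ℝ) - (k : ℝ)) • α
  iota_eq_star_L_star : ∀ α, iota α = - star (L (star α))
  L_pow_bijOn : ∀ k : ℕ, k < n →
    Set.BijOn (⇑(L ^ (n - k))) (deg (k : ℤ) : Set Ω) (deg ((2 * n : ℤ) - k) : Set Ω)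

attribute [instance] SymplecticFormsComplex.addCommGroupForms
  SymplecticFormsComplex.moduleForms

namespace SymplecticFormsComplex

variable {n : ℕ} (C : SymplecticFormsComplex n)

/-- The set `Im d ∩ ker δ` inside `Ω^k(M)`. -/
def exactCoclosed (k : ℤ) : Set C.Ω :=
  {α | α ∈ C.deg k ∧ (∃ β ∈ C.deg (k - 1), α = C.d β) ∧ C.δ α = 0}

/-- The set `Im δ ∩ ker d` inside `Ω^k(M)`. -/
def coexactClosed (k : ℤ) : Set C.Ω :=
  {α | α ∈ C.deg k ∧ (∃ β ∈ C.deg (k + 1), α = C.δ β) ∧ C.d α = 0}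

/-- The set `Im dδ` inside `Ω^k(M)`. -/
def imDDelta (k : ℤ) : Set C.Ω :=
  {α | α ∈ C.deg k ∧ ∃ β ∈ C.deg k, α = C.d (C.δ β)}

/-- The set `Im d ∩ Im δ` inside `Ω^k(M)`. -/
def exactCoexact (k : ℤ) : Set C.Ω :=
  {α | α ∈ C.deg k ∧ (∃ β ∈ C.deg (k - 1), α = C.d β) ∧ ∃ γ ∈ C.deg (k + 1), α = C.δ γ}

/-- `(M, ω)` satisfies the `dδ`-lemma up to degree `s`:
`Im d ∩ ker δ = Im dδ = Im δ ∩ ker d` on `Ω^k(M)` for all `k ≤ s`, and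
`Im d ∩ ker δ = Im dδ` on `Ω^{s+1}(M)`. -/
def DDeltaLemmaUpTo (s : ℕ) : Prop :=
  (∀ k : ℤ, k ≤ (s : ℤ) →
      C.exactCoclosed k = C.imDDelta k ∧ C.coexactClosed k = C.imDDelta k) ∧
  C.exactCoclosed ((s : ℤ) + 1) = C.imDDelta ((s : ℤ) + 1)

/-- `(M, ω)` is `s`-Lefschetz: for every `k ≤ s` the map
`L^{n-k} : H^k(M) → H^{2n-k}(M)`, `[α] ↦ [ω^{n-k} ∧ α]`, is surjective. -/
def IsLefschetz (s : ℕ) : Prop :=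
  ∀ k : ℕ, k ≤ s → ∀ β ∈ C.deg ((2 * n : ℤ) - k), C.d β = 0 →
    ∃ α ∈ C.deg (k : ℤ), C.d α = 0 ∧
      ∃ γ ∈ C.deg ((2 * n : ℤ) - k - 1), β = (C.L ^ (n - k)) α + C.d γ

/-- The natural map `i : H^k_δ(M, ω) → H^k(M)` induced by the inclusion of the
subcomplex of coclosed forms in the de Rham complex is bijective. -/
def IBijective (k : ℤ) : Prop :=
  (∀ α ∈ C.deg k, C.d α = 0 → C.δ α = 0 → (∃ β ∈ C.deg (k - 1), α = C.d β) →
      ∃ γ ∈ C.deg (k - 1), C.δ γ = 0 ∧ α = C.d γ) ∧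
  (∀ α ∈ C.deg k, C.d α = 0 →
      ∃ α' ∈ C.deg k, C.d α' = 0 ∧ C.δ α' = 0 ∧ ∃ γ ∈ C.deg (k - 1), α = α' + C.d γ)

end SymplecticFormsComplex

/-- Abstract model of the forms of a **compact** symplectic manifold of
dimension `2 n`.  Compactness is encoded through its cohomological consequence
(Poincaré duality): a surjective Lefschetz map `L^{n-k} : H^k(M) → H^{2n-k}(M)`
is automatically injective. -/
structure CompactSymplecticFormsComplex (n : ℕ) extends SymplecticFormsComplex n where
  lefschetz_inj : ∀ k : ℕ, k ≤ n →
    (∀ β ∈ deg ((2 * n : ℤ) - k), d β = 0 →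
      ∃ α ∈ deg (k : ℤ), d α = 0 ∧
        ∃ γ ∈ deg ((2 * n : ℤ) - k - 1), β = (L ^ (n - k)) α + d γ) →
    ∀ α ∈ deg (k : ℤ), d α = 0 →
      (∃ ξ ∈ deg ((2 * n : ℤ) - k - 1), (L ^ (n - k)) α = d ξ) →
      ∃ η ∈ deg ((k : ℤ) - 1), α = d η

/-- Let `(M, ω)` be a symplectic manifold of dimension `2 n`.  If `α` is a
primitive `k`-form (`k ≤ n`), then `dδ(α)` is also primitive. -/
theorem primitive_d_delta_of_primitive (n : ℕ) (C : SymplecticFormsComplex n)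
    (k : ℕ) (hk : k ≤ n) (α : C.Ω) (hα : α ∈ C.deg (k : ℤ))
    (hprim : (C.L ^ (n - k + 1)) α = 0) :
    (C.L ^ (n - k + 1)) (C.d (C.δ α)) = 0 := by
  have key : ∀ β : C.Ω, C.d (C.δ (C.L β)) = C.L (C.d (C.δ β)) := by
    intro β
    rw [C.L_δ_comm, map_add, C.d_d, add_zero, C.d_L_comm]
  have comm : ∀ (p : ℕ) (β : C.Ω), (C.L ^ p) (C.d (C.δ β)) = C.d (C.δ ((C.L ^ p) β)) := by
    intro p
    induction p with
    | zero => intro β; simp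
    | succ q ih =>
        intro β
        rw [pow_succ, Module.End.mul_apply, Module.End.mul_apply, ← key, ih]
  rw [comm, hprim, map_zero, map_zero]
end
end

section
/- Let (M,ω) be a symplectic manifold of dimension 2n, let i ≤ n and let ψ = L^{n−i}(φ) ∈ Ω^{2n−i}(M), where by the Lepage decomposition theorem φ = φ_i + L(φ_{i−2}) + ⋯ + L^q(φ_{i−2q}) with q ≤ [i/2] and each φ_{i−2j} a primitive (i−2j)-form. Then: (i) if dδ(ψ) = 0 (equivalently dδ(φ) = 0), then dδ(φ_{i−2j}) = 0 for every j = 0,…,q; (ii) if δφ_{i−2j} is exact for all j = 0,…,q, then both δφ and δψ are exact. -/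
noncomputable section

namespace SymplecticFormsComplex

variable {n : ℕ} (C : SymplecticFormsComplex n)

lemma aux_deg_congr {a b : ℤ} (h : a = b) {x : C.Ω} (hx : x ∈ C.deg a) :
    x ∈ C.deg b := h ▸ hx

lemma aux_dδL (α : C.Ω) : C.d (C.δ (C.L α)) = C.L (C.d (C.δ α)) := by
  rw [C.L_δ_comm, map_add, C.d_d, add_zero, C.d_L_comm]

lemma aux_dδLpow (m : ℕ) (α : C.Ω) :
    C.d (C.δ ((C.L ^ m) α)) = (C.L ^ m) (C.d (C.δ α)) := by
  induction m with
  | zero => simp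
  | succ m ih =>
      rw [pow_succ', Module.End.mul_apply, C.aux_dδL, ih, ← Module.End.mul_apply,
        ← pow_succ']

lemma aux_L_pow_mem (k : ℤ) (t : ℕ) {α : C.Ω} (hα : α ∈ C.deg k) :
    (C.L ^ t) α ∈ C.deg (k + 2 * t) := by
  induction t with
  | zero => simpa using hα
  | succ t ih =>
      rw [pow_succ', Module.End.mul_apply]
      exact C.aux_deg_congr (by push_cast; ring) (C.L_mem _ _ ih)

lemma aux_iota_L_pow (k : ℤ) {β : C.Ω} (hβ : β ∈ C.deg k) (t : ℕ) :
    C.iota ((C.L ^ (t + 1)) β) =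
      (C.L ^ (t + 1)) (C.iota β) +
        (((t : ℝ) + 1) * ((n : ℝ) - (k : ℝ) - (t : ℝ))) • (C.L ^ t) β := by
  induction t with
  | zero =>
      have h := C.iota_L_comm k β hβ
      rw [sub_eq_iff_eq_add] at h
      rw [pow_one, pow_zero, Module.End.one_apply, h]
      match_scalars <;> ring
  | succ t ih =>
      have hmem' : (C.L ^ (t + 1)) β ∈ C.deg (k + 2 * (t + 1)) :=
        C.aux_L_pow_mem k (t + 1) hβ
      have h := C.iota_L_comm _ _ hmem'
      rw [sub_eq_iff_eq_add] at h
      rw [pow_succ' (C.L) (t + 1), Module.End.mul_apply, h, ih, map_add, map_smul,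
        ← Module.End.mul_apply C.L ((C.L ^ (t + 1))), ← pow_succ',
        ← Module.End.mul_apply C.L ((C.L ^ t)), ← pow_succ']
      push_cast
      match_scalars <;> ring

lemma aux_prim_iota (k : ℕ) (hk : k ≤ n) {β : C.Ω} (hβ : β ∈ C.deg (k : ℤ))
    (hp : (C.L ^ (n - k + 1)) β = 0) : C.iota β = 0 := by
  have hι : C.iota β ∈ C.deg ((k : ℤ) - 2) := C.iota_mem _ _ hβ
  rcases lt_or_ge k 2 with h2 | h2
  · have hbot := C.deg_eq_bot ((k : ℤ) - 2) (Or.inl (by omega))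
    rw [hbot] at hι
    simpa using hι
  · have hL : (C.L ^ (n - k + 1 + 1)) (C.iota β) = 0 := by
      have hf := C.aux_iota_L_pow (k : ℤ) hβ (n - k + 1)
      have h1 : (C.L ^ (n - k + 1 + 1)) β = 0 := by
        rw [pow_succ', Module.End.mul_apply, hp, map_zero]
      rw [h1, map_zero, hp, smul_zero, add_zero] at hf
      exact hf.symm
    have hbij := C.L_pow_bijOn (k - 2) (by omega)
    have hexp : n - (k - 2) = n - k + 1 + 1 := by omega
    have hcast : ((k - 2 : ℕ) : ℤ) = (k : ℤ) - 2 := by omega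
    have h0 : (0 : C.Ω) ∈ C.deg ((k - 2 : ℕ) : ℤ) := (C.deg _).zero_mem
    have hι' : C.iota β ∈ C.deg ((k - 2 : ℕ) : ℤ) := by rw [hcast]; exact hι
    exact hbij.injOn hι' h0 (by rw [hexp]; simp [hL])

lemma aux_lepage_unique : ∀ (Q I : ℕ), I ≤ n → 2 * Q ≤ I →
    ∀ β : ℕ → C.Ω, (∀ j ≤ Q, β j ∈ C.deg ((I : ℤ) - 2 * j)) →
    (∀ j ≤ Q, (C.L ^ (n - (I - 2 * j) + 1)) (β j) = 0) →
    (∑ j ∈ Finset.range (Q + 1), (C.L ^ j) (β j)) = 0 →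
    ∀ j ≤ Q, β j = 0 := by
  intro Q
  induction Q with
  | zero =>
      intro I hI hQ β hmem hprim hsum j hj
      interval_cases j
      simpa using hsum
  | succ Q ih =>
      intro I hI hQ β hmem hprim hsum
      -- the contraction of each primitive component vanishes
      have hι : ∀ j ≤ Q + 1, C.iota (β j) = 0 := by
        intro j hj
        refine C.aux_prim_iota (I - 2 * j) (by omega)
          (C.aux_deg_congr (by omega) (hmem j hj)) (hprim j hj)
      -- contract the total sum
      have h := congrArg C.iota hsum
      rw [map_sum, map_zero, Finset.sum_range_succ'] at h
      have h0term : C.iota ((C.L ^ 0) (β 0)) = 0 := by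
        rw [pow_zero, Module.End.one_apply]; exact hι 0 (by omega)
      rw [h0term, add_zero] at h
      have hterm : ∀ t ∈ Finset.range (Q + 1),
          C.iota ((C.L ^ (t + 1)) (β (t + 1))) =
            (((t : ℝ) + 1) * ((n : ℝ) - (((I : ℤ) - 2 * (t + 1) : ℤ) : ℝ) - (t : ℝ))) •
              (C.L ^ t) (β (t + 1)) := by
        intro t ht
        have ht' : t ≤ Q := by simpa [Nat.lt_succ_iff] using ht
        rw [C.aux_iota_L_pow ((I : ℤ) - 2 * (t + 1)) (hmem (t + 1) (by omega)) t,
          hι (t + 1) (by omega), map_zero, zero_add]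
      rw [Finset.sum_congr rfl hterm] at h
      -- the rescaled shifted family is a Lepage system of degree I - 2
      set c : ℕ → ℝ := fun t =>
        ((t : ℝ) + 1) * ((n : ℝ) - (((I : ℤ) - 2 * (t + 1) : ℤ) : ℝ) - (t : ℝ)) with hc
      have hcne : ∀ t, c t ≠ 0 := by
        intro t
        have hIn : (I : ℝ) ≤ (n : ℝ) := by exact_mod_cast hI
        have ht0 : (0 : ℝ) ≤ (t : ℝ) := Nat.cast_nonneg t
        apply ne_of_gt
        show (0 : ℝ) <
          ((t : ℝ) + 1) * ((n : ℝ) - (((I : ℤ) - 2 * (t + 1) : ℤ) : ℝ) - (t : ℝ))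
        push_cast
        nlinarith
      have hβ' := ih (I - 2) (by omega) (by omega) (fun t => c t • β (t + 1))
        (fun t ht => Submodule.smul_mem _ _
          (C.aux_deg_congr (by omega) (hmem (t + 1) (by omega))))
        (fun t ht => by
          have he : n - (I - 2 - 2 * t) + 1 = n - (I - 2 * (t + 1)) + 1 := by omega
          rw [he, map_smul, hprim (t + 1) (by omega), smul_zero])
        (by
          have : ∀ t ∈ Finset.range (Q + 1),
              (C.L ^ t) (c t • β (t + 1)) = c t • (C.L ^ t) (β (t + 1)) := by
            intro t ht; rw [map_smul]
          rw [Finset.sum_congr rfl this]; exact h)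
      have hpos : ∀ j ≤ Q + 1, 1 ≤ j → β j = 0 := by
        intro j hj h1
        obtain ⟨t, rfl⟩ : ∃ t, j = t + 1 := ⟨j - 1, by omega⟩
        have := hβ' t (by omega)
        rcases smul_eq_zero.mp this with hce | hb
        · exact absurd hce (hcne t)
        · exact hb
      intro j hj
      rcases Nat.eq_zero_or_pos j with rfl | hj1
      · -- β 0 = 0 from the original sum
        rw [Finset.sum_range_succ'] at hsum
        have : ∑ t ∈ Finset.range (Q + 1), (C.L ^ (t + 1)) (β (t + 1)) = 0 :=
          Finset.sum_eq_zero fun t ht => by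
            have ht' : t ≤ Q := by simpa [Nat.lt_succ_iff] using ht
            rw [hpos (t + 1) (by omega) (by omega), map_zero]
        rw [this, zero_add, pow_zero, Module.End.one_apply] at hsum
        exact hsum
      · exact hpos j hj hj1

lemma aux_delta_L_exact {α : C.Ω} (h : ∃ γ, C.δ α = C.d γ) :
    ∃ γ, C.δ (C.L α) = C.d γ := by
  obtain ⟨γ, hγ⟩ := h
  exact ⟨C.L γ + α, by rw [C.L_δ_comm, hγ, map_add, C.d_L_comm]⟩

lemma aux_delta_Lpow_exact (m : ℕ) {α : C.Ω} (h : ∃ γ, C.δ α = C.d γ) :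
    ∃ γ, C.δ ((C.L ^ m) α) = C.d γ := by
  induction m with
  | zero => simpa using h
  | succ m ih =>
      rw [pow_succ', Module.End.mul_apply]
      exact C.aux_delta_L_exact ih

lemma aux_delta_sum_exact (s : Finset ℕ) (f : ℕ → C.Ω)
    (h : ∀ j ∈ s, ∃ γ, C.δ (f j) = C.d γ) :
    ∃ γ, C.δ (∑ j ∈ s, f j) = C.d γ := by
  classical
  induction s using Finset.induction with
  | empty => exact ⟨0, by simp⟩
  | @insert a s ha ih =>
      obtain ⟨γa, hγa⟩ := h a (Finset.mem_insert_self a s)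
      obtain ⟨γs, hγs⟩ := ih fun j hj => h j (Finset.mem_insert_of_mem hj)
      exact ⟨γa + γs, by rw [Finset.sum_insert ha, map_add, hγa, hγs, map_add]⟩

end SymplecticFormsComplex

/-- Let `(M, ω)` be a symplectic manifold of dimension `2 n`, let `i ≤ n` and
let `ψ = L^{n-i}(φ) ∈ Ω^{2n-i}(M)`, where by the Lepage decomposition theorem
`φ = φ_i + L(φ_{i-2}) + ⋯ + L^q(φ_{i-2q})` with `q ≤ [i/2]` and each `φ_{i-2j}`
a primitive `(i-2j)`-form.  Then:
 (i)  if `dδ(ψ) = 0`, then `dδ(φ_{i-2j}) = 0` for every `j = 0, …, q`;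
 (ii) if `δφ_{i-2j}` is exact for all `j = 0, …, q`, then both `δφ` and `δψ`
      are exact. -/
theorem lepage_d_delta (n : ℕ) (C : SymplecticFormsComplex n)
    (i q : ℕ) (hi : i ≤ n) (hq : 2 * q ≤ i) (φ : ℕ → C.Ω)
    (hmem : ∀ j ≤ q, φ j ∈ C.deg ((i : ℤ) - 2 * j))
    (hprim : ∀ j ≤ q, (C.L ^ (n - (i - 2 * j) + 1)) (φ j) = 0) :
    (C.d (C.δ ((C.L ^ (n - i)) (∑ j ∈ Finset.range (q + 1), (C.L ^ j) (φ j)))) = 0 →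
      ∀ j ≤ q, C.d (C.δ (φ j)) = 0) ∧
    ((∀ j ≤ q, ∃ γ, C.δ (φ j) = C.d γ) →
      (∃ γ, C.δ (∑ j ∈ Finset.range (q + 1), (C.L ^ j) (φ j)) = C.d γ) ∧
      (∃ γ, C.δ ((C.L ^ (n - i)) (∑ j ∈ Finset.range (q + 1), (C.L ^ j) (φ j))) = C.d γ)) := by
  constructor
  · -- part (i)
    intro h0 j hj
    set S := ∑ j ∈ Finset.range (q + 1), (C.L ^ j) (φ j) with hS
    rw [C.aux_dδLpow] at h0
    have hdd : C.d (C.δ S) =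
        ∑ j ∈ Finset.range (q + 1), (C.L ^ j) (C.d (C.δ (φ j))) := by
      rw [hS, map_sum, map_sum]
      exact Finset.sum_congr rfl fun j _ => C.aux_dδLpow j (φ j)
    have hmemβ : ∀ j ≤ q, C.d (C.δ (φ j)) ∈ C.deg ((i : ℤ) - 2 * j) := by
      intro j hj
      exact C.aux_deg_congr (by ring)
        (C.d_mem _ _ (C.δ_mem _ _ (hmem j hj)))
    have hT : C.d (C.δ S) = 0 := by
      rcases eq_or_lt_of_le hi with he | hlt
      · rw [show n - i = 0 by omega, pow_zero, Module.End.one_apply] at h0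
        exact h0
      · have hmemT : C.d (C.δ S) ∈ C.deg (i : ℤ) := by
          rw [hdd]
          refine Submodule.sum_mem _ fun j hjr => ?_
          exact C.aux_deg_congr (by ring)
            (C.aux_L_pow_mem _ j (hmemβ j (by
              simpa [Nat.lt_succ_iff] using hjr)))
        exact (C.L_pow_bijOn i hlt).injOn hmemT (Submodule.zero_mem _)
          (by simpa using h0)
    have hprimβ : ∀ j ≤ q,
        (C.L ^ (n - (i - 2 * j) + 1)) (C.d (C.δ (φ j))) = 0 := by
      intro j hj
      rw [← C.aux_dδLpow, hprim j hj, map_zero, map_zero]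
    exact C.aux_lepage_unique q i hi hq (fun j => C.d (C.δ (φ j))) hmemβ hprimβ
      (by rw [← hdd]; exact hT) j hj
  · -- part (ii)
    intro hex
    have h1 : ∃ γ, C.δ (∑ j ∈ Finset.range (q + 1), (C.L ^ j) (φ j)) = C.d γ := by
      refine C.aux_delta_sum_exact _ _ fun j hjr => ?_
      exact C.aux_delta_Lpow_exact j (hex j (by simpa [Nat.lt_succ_iff] using hjr))
    exact ⟨h1, C.aux_delta_Lpow_exact (n - i) h1⟩
end
end
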